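/- arXiv:1711.10659 — 8 statements merged into one kernel-verified Lean document; each statement's English description precedes it below -/
import Mathlib

section
/- Let R be a unique factorization domain and M an R-module presented by generators α₁,...,αₙ and the single relation p₁α₁ + ... + pₙαₙ = 0 with pₖ ∈ R. If pᵢ and pⱼ are relatively prime (coprime) for some i ≠ j, then M is torsion-free. -/
/-- If an `R`-module (over a UFD) is presented by generators `α₁,...,αₙ` and the single
relation `p₁α₁ + ⋯ + pₙαₙ = 0`, and some `pᵢ`, `pⱼ` with `i ≠ j` are relatively prime,
then the module is torsion-free. -/
theorem stmt0 {R : Type*} [CommRing R] [IsDomain R] [UniqueFactorizationMonoid R]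
    {n : ℕ} (p : Fin n → R) (i j : Fin n) (hij : i ≠ j)
    (hcop : IsRelPrime (p i) (p j)) :
    ∀ (r : R) (m : (Fin n → R) ⧸ Submodule.span R {p}),
      r • m = 0 → r = 0 ∨ m = 0 := by
  classical
  have : GCDMonoid R := UniqueFactorizationMonoid.toGCDMonoid R
  intro r m hm
  by_cases hr : r = 0
  · exact Or.inl hr
  right
  obtain ⟨x, rfl⟩ := Submodule.Quotient.mk_surjective _ m
  rw [← Submodule.Quotient.mk_smul, Submodule.Quotient.mk_eq_zero,
    Submodule.mem_span_singleton] at hm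
  obtain ⟨c, hc⟩ := hm
  have hk : ∀ k, c * p k = r * x k := fun k => by
    have := congrFun hc k
    simpa [mul_comm] using this
  have hdi : r ∣ c * p i := ⟨x i, hk i⟩
  have hdj : r ∣ c * p j := ⟨x j, hk j⟩
  have hgcd : r ∣ c * gcd (p i) (p j) :=
    dvd_trans (dvd_gcd hdi hdj) (gcd_mul_left' c (p i) (p j)).dvd
  have hu : IsUnit (gcd (p i) (p j)) := gcd_isUnit_iff_isRelPrime.mpr hcop
  have hrc : r ∣ c := (IsUnit.dvd_mul_right hu).mp hgcd
  obtain ⟨d, rfl⟩ := hrc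
  rw [Submodule.Quotient.mk_eq_zero, Submodule.mem_span_singleton]
  refine ⟨d, funext fun k => ?_⟩
  have h := hk k
  rw [mul_assoc] at h
  exact (mul_left_cancel₀ hr h).symm ▸ rfl
end

section
/- Let R be a unique factorization domain and M the R-module presented by two generators α, β and the single relation p₁α + p₂β = 0, with p₁, p₂ ∈ R not both zero. Then M is torsion-free if and only if p₁ and p₂ are relatively prime. -/
/-!
A common divisor `d` of `p₁, p₂` writes `(p₁, p₂) = d • w`; then `d` kills the class of `w`,
which is nonzero unless `d` is a unit. Conversely, if `r • x = c • (p₁, p₂)` with `r ≠ 0`, then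
`r` divides `c * p₁` and `c * p₂`, hence divides `c` by coprimality, and cancelling `r` puts `x`
in the span of `(p₁, p₂)`.
-/

open Module Submodule

theorem IsRelPrime.dvd_of_dvd_mul_of_dvd_mul {α : Type*} [CommMonoidWithZero α]
    [IsCancelMulZero α] [DecompositionMonoid α] {a b c r : α} (hab : IsRelPrime a b)
    (ha : r ∣ c * a) (hb : r ∣ c * b) : r ∣ c := by
  obtain ⟨r₁, r₂, hr₁, hr₂, rfl⟩ := DecompositionMonoid.primal r ha
  obtain ⟨c', rfl⟩ := hr₁
  rcases eq_or_ne r₁ 0 with rfl | hr₁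
  · simp
  have hc'b : r₂ ∣ c' * b := (mul_dvd_mul_iff_left hr₁).mp (by rwa [← mul_assoc])
  exact mul_dvd_mul_left r₁ ((hab.of_dvd_left hr₂).dvd_of_dvd_mul_right hc'b)

section

variable {R M : Type*} [CommRing R] [IsDomain R] [AddCommGroup M] [Module R M]

theorem isUnit_of_eq_smul_of_isTorsionFree_quotient [IsTorsionFree R M] {v w : M} {d : R}
    [IsTorsionFree R (M ⧸ R ∙ v)] (hv : v ≠ 0) (hvw : v = d • w) : IsUnit d := by
  have hd : d ≠ 0 := by rintro rfl; simp [hvw] at hv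
  have hw : w ≠ 0 := by rintro rfl; simp [hvw] at hv
  have hw_mem : w ∈ R ∙ v := by
    rw [← Quotient.mk_eq_zero, ← smul_eq_zero_iff_right (M := M ⧸ R ∙ v) hd,
      ← Quotient.mk_smul, ← hvw, Quotient.mk_eq_zero]
    exact mem_span_singleton_self v
  obtain ⟨c, hc⟩ := mem_span_singleton.mp hw_mem
  refine .of_mul_eq_one c (smul_left_injective R hw ?_)
  dsimp only
  rw [mul_comm, mul_smul, ← hvw, hc, one_smul]

theorem isRelPrime_of_isTorsionFree_quotient {p₁ p₂ : R} (hp : ¬ (p₁ = 0 ∧ p₂ = 0))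
    [IsTorsionFree R ((Fin 2 → R) ⧸ R ∙ ![p₁, p₂])] : IsRelPrime p₁ p₂ := by
  rintro d ⟨a, rfl⟩ ⟨b, rfl⟩
  refine isUnit_of_eq_smul_of_isTorsionFree_quotient (v := ![d * a, d * b]) (w := ![a, b]) ?_ ?_
  · simpa [funext_iff, Fin.forall_fin_two] using hp
  · ext i; fin_cases i <;> simp

theorem IsRelPrime.isTorsionFree_quotient [DecompositionMonoid R] {p₁ p₂ : R}
    (h : IsRelPrime p₁ p₂) : IsTorsionFree R ((Fin 2 → R) ⧸ R ∙ ![p₁, p₂]) := by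
  refine .of_smul_eq_zero fun r m hrm ↦ or_iff_not_imp_left.mpr fun hr ↦ ?_
  obtain ⟨x, rfl⟩ := Submodule.Quotient.mk_surjective _ m
  rw [← Quotient.mk_smul, Quotient.mk_eq_zero, mem_span_singleton] at hrm
  rw [Quotient.mk_eq_zero, mem_span_singleton]
  obtain ⟨c, hc⟩ := hrm
  have hdvd (i : Fin 2) : r ∣ c * ![p₁, p₂] i := ⟨x i, by simpa using congr_fun hc i⟩
  obtain ⟨e, rfl⟩ := h.dvd_of_dvd_mul_of_dvd_mul (hdvd 0) (hdvd 1)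
  exact ⟨e, smul_right_injective _ hr (by dsimp only; rw [← hc, mul_smul])⟩

end

/-- Over a UFD `R`, the module `R²/R·(p₁,p₂)` (with `p₁, p₂` not both zero) is torsion-free
if and only if `p₁` and `p₂` are relatively prime. -/
theorem stmt2 {R : Type*} [CommRing R] [IsDomain R] [UniqueFactorizationMonoid R]
    (p₁ p₂ : R) (hp : ¬ (p₁ = 0 ∧ p₂ = 0)) :
    (∀ (r : R) (m : (Fin 2 → R) ⧸ Submodule.span R {![p₁, p₂]}),
        r • m = 0 → r = 0 ∨ m = 0) ↔ IsRelPrime p₁ p₂ := by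
  rw [← isTorsionFree_iff_smul_eq_zero]
  exact ⟨fun _ ↦ isRelPrime_of_isTorsionFree_quotient hp, IsRelPrime.isTorsionFree_quotient⟩
end

section
/- If a group G surjects onto a non-abelian free group of rank 2, and ψ : F(2) → Γ is any surjective homomorphism onto a group Γ, then there is a surjective homomorphism φ : G → Γ whose kernel's abelianization (as a ZΓ-module) surjects onto the abelianization of ker(ψ) as a ZΓ-module. -/
/-- Conjugation by `g : G` on the kernel of `φ`. -/
def conjKer {G Γ : Type*} [Group G] [Group Γ] (φ : G →* Γ) (g : G) : φ.ker →* φ.ker where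
  toFun k := ⟨g * (k : G) * g⁻¹, (MonoidHom.normal_ker φ).conj_mem _ k.2 g⟩
  map_one' := by ext; simp
  map_mul' x y := by ext; simp [mul_assoc]

/-- The induced conjugation action on the abelianization of the kernel of `φ`. -/
def conjAb {G Γ : Type*} [Group G] [Group Γ] (φ : G →* Γ) (g : G) :
    Abelianization φ.ker →* Abelianization φ.ker :=
  Abelianization.map (conjKer φ g)

lemma of_conj {N : Type*} [Group N] (c a : N) :
    Abelianization.of (c * a * c⁻¹) = Abelianization.of a := by
  rw [map_mul, map_mul, map_inv, mul_right_comm, mul_inv_cancel, one_mul]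

/-- If `G` surjects onto the free group of rank 2, and `ψ : F(2) → Γ` is surjective, then
there is a surjective `φ : G → Γ` such that the abelianization of `ker φ` surjects onto the
abelianization of `ker ψ` equivariantly with respect to the conjugation actions (i.e. as
`ℤΓ`-modules). -/
theorem stmt3 {G Γ : Type*} [Group G] [Group Γ]
    (hG : ∃ e : G →* FreeGroup (Fin 2), Function.Surjective e)
    (ψ : FreeGroup (Fin 2) →* Γ) (hψ : Function.Surjective ψ) :
    ∃ φ : G →* Γ, Function.Surjective φ ∧
      ∃ θ : Abelianization φ.ker →* Abelianization ψ.ker,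
        Function.Surjective θ ∧
        ∀ (g : G) (h : FreeGroup (Fin 2)), φ g = ψ h →
          ∀ x : Abelianization φ.ker, θ (conjAb φ g x) = conjAb ψ h (θ x) := by
  obtain ⟨e, he⟩ := hG
  refine ⟨ψ.comp e, hψ.comp he, ?_⟩
  let e' : (ψ.comp e).ker →* ψ.ker :=
    { toFun := fun k => ⟨e k, k.2⟩
      map_one' := by ext; simp
      map_mul' := fun x y => by ext; simp }
  have he' : Function.Surjective e' := by
    rintro ⟨n, hn⟩
    obtain ⟨g, rfl⟩ := he n
    exact ⟨⟨g, hn⟩, rfl⟩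
  refine ⟨Abelianization.map e', ?_, ?_⟩
  · intro y
    obtain ⟨n, hn⟩ := Quotient.exists_rep y
    obtain ⟨k, rfl⟩ := he' n
    exact ⟨Abelianization.of k, by rw [Abelianization.map_of, ← hn]; rfl⟩
  · intro g h hgh x
    obtain ⟨k, hk⟩ := Quotient.exists_rep x
    have hk' : x = Abelianization.of k := hk.symm
    subst hk'
    simp only [conjAb, Abelianization.map_of]
    have hgh' : ψ (e g) = ψ h := hgh
    have hc : e g * h⁻¹ ∈ ψ.ker := by
      simp [MonoidHom.mem_ker, hgh']
    have key : e' (conjKer (ψ.comp e) g k) =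
        (⟨e g * h⁻¹, hc⟩ : ψ.ker) * conjKer ψ h (e' k) * (⟨e g * h⁻¹, hc⟩ : ψ.ker)⁻¹ := by
      ext
      simp only [conjKer, MonoidHom.coe_mk, OneHom.coe_mk, e', Subgroup.coe_mul,
        InvMemClass.coe_inv, map_mul, map_inv]
      group
    rw [key, of_conj]
end

section
/- Let ψ : F(2) → ℤ be a surjective homomorphism from the free group of rank 2 onto ℤ. Then ker(ψ)/[ker(ψ),ker(ψ)] is a free module of rank 1 over the group ring ℤ[ℤ] ≅ ℤ[t,t⁻¹]. -/
/-- The property that a `ℤ[t,t⁻¹]`-module structure on the abelianization of `ker ψ` is the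
one induced by conjugation (a generator `t` of `ℤ` acts by conjugation by any preimage of `t`),
and that with this structure the module is free of rank one, i.e. isomorphic to `ℤ[t,t⁻¹]`. -/
def FreeRankOneWithConjAction (ψ : FreeGroup (Fin 2) →* Multiplicative ℤ)
    (inst : Module (LaurentPolynomial ℤ) (Additive (Abelianization ψ.ker))) : Prop :=
  letI := inst
  (∀ (h : FreeGroup (Fin 2)) (x : Abelianization ψ.ker),
      ψ h = Multiplicative.ofAdd (1 : ℤ) →
      (LaurentPolynomial.T 1 : LaurentPolynomial ℤ) • (Additive.ofMul x) =
        Additive.ofMul (conjAb ψ h x)) ∧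
  Nonempty ((Additive (Abelianization ψ.ker)) ≃ₗ[LaurentPolynomial ℤ] LaurentPolynomial ℤ)

/-!
Precomposing with Nielsen automorphisms runs the Euclidean algorithm on `(ψ a, ψ b)`, so up to an
automorphism of `F₂` every surjection onto `ℤ` is the standard one `a ↦ t, b ↦ 1`. Its kernel is
freely generated by the conjugates `bₘ = aᵐ b a⁻ᵐ` (`m ∈ ℤ`), as one sees from `F₂ ≅ F(ℤ) ⋊ ℤ`,
and conjugation by `a` sends `bₘ` to `bₘ₊₁`. Abelianizing, `ker ψ / [ker ψ, ker ψ] ≅ ℤ^(ℤ)`, which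
is `ℤ[t, t⁻¹]` with conjugation by `a` acting as multiplication by `t`; transporting the module
structure along this isomorphism gives the claim. Any other preimage of `t` acts in the same way,
because elements of `ker ψ` act trivially on its abelianization.
-/

section ConjAction

variable {G Γ : Type*} [Group G] [Group Γ] (φ : G →* Γ)

lemma conjKer_mul (g₁ g₂ : G) : conjKer φ (g₁ * g₂) = (conjKer φ g₁).comp (conjKer φ g₂) :=
  MonoidHom.ext fun _ => Subtype.ext (by simp [conjKer, mul_assoc])

lemma conjAb_mul (g₁ g₂ : G) : conjAb φ (g₁ * g₂) = (conjAb φ g₁).comp (conjAb φ g₂) := by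
  rw [conjAb, conjKer_mul, ← Abelianization.map_comp]
  rfl

lemma conjAb_of_mem_ker {k : G} (hk : k ∈ φ.ker) : conjAb φ k = MonoidHom.id _ := by
  refine Abelianization.hom_ext _ _ (MonoidHom.ext fun x => ?_)
  have : conjKer φ k x = ⟨k, hk⟩ * x * (⟨k, hk⟩ : φ.ker)⁻¹ := rfl
  simp [conjAb, Abelianization.map_of, this]

lemma conjAb_congr {g g' : G} (h : φ g = φ g') : conjAb φ g = conjAb φ g' := by
  have hk : g * g'⁻¹ ∈ φ.ker := by simp [h]
  rw [← inv_mul_cancel_right g g', conjAb_mul, conjAb_of_mem_ker φ hk, MonoidHom.id_comp]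

end ConjAction

open Multiplicative

local notation "F₂" => FreeGroup (Fin 2)

namespace FreeGroupRankTwo

def a : F₂ := FreeGroup.of 0

def b : F₂ := FreeGroup.of 1

lemma hom_ext {G : Type*} [Group G] {f g : F₂ →* G} (ha : f a = g a) (hb : f b = g b) :
    f = g :=
  FreeGroup.ext_hom _ _ (Fin.forall_fin_two.2 ⟨ha, hb⟩)

@[simp] lemma lift_a {G : Type*} [Group G] (u v : G) : FreeGroup.lift ![u, v] a = u := by
  simp [a]

@[simp] lemma lift_b {G : Type*} [Group G] (u v : G) : FreeGroup.lift ![u, v] b = v := by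
  simp [b]

def standardHom : F₂ →* Multiplicative ℤ := FreeGroup.lift ![ofAdd 1, 1]

@[simp] lemma standardHom_a : standardHom a = ofAdd 1 := lift_a _ _

@[simp] lemma standardHom_b : standardHom b = 1 := lift_b _ _

def invA : F₂ ≃* F₂ :=
  MonoidHom.toMulEquiv (FreeGroup.lift ![a⁻¹, b]) (FreeGroup.lift ![a⁻¹, b])
    (hom_ext (by simp) (by simp)) (hom_ext (by simp) (by simp))

@[simp] lemma invA_a : invA a = a⁻¹ := by simp [invA]

@[simp] lemma invA_b : invA b = b := by simp [invA]

def shear (k : ℤ) : F₂ ≃* F₂ :=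
  MonoidHom.toMulEquiv (FreeGroup.lift ![b, a * b ^ (-k)]) (FreeGroup.lift ![b * a ^ k, a])
    (hom_ext (by simp) (by simp [map_zpow])) (hom_ext (by simp [map_zpow]) (by simp))

@[simp] lemma shear_a (k : ℤ) : shear k a = b := by simp [shear]

@[simp] lemma shear_b (k : ℤ) : shear k b = a * b ^ (-k) := by simp [shear]

section Nielsen

variable (ψ : F₂ →* Multiplicative ℤ)

lemma eq_zpowersHom_comp_standardHom (hb : ψ b = 1) :
    ψ = (zpowersHom _ (ψ a)).comp standardHom :=
  hom_ext (by simp) (by simp [hb])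

lemma exists_comp_eq_standardHom_of_map_b_eq_one (hψ : Function.Surjective ψ) (hb : ψ b = 1) :
    ∃ α : F₂ ≃* F₂, ψ.comp α.toMonoidHom = standardHom := by
  obtain ⟨g, hg⟩ := hψ (ofAdd 1)
  rw [eq_zpowersHom_comp_standardHom ψ hb] at hg
  have : toAdd (standardHom g) * toAdd (ψ a) = 1 := by simpa [mul_comm] using congrArg toAdd hg
  rcases Int.eq_one_or_neg_one_of_mul_eq_one' this with ⟨-, ha⟩ | ⟨-, ha⟩
  · exact ⟨MulEquiv.refl _, hom_ext (by simp [← ha]) (by simp [hb])⟩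
  · exact ⟨invA, hom_ext (by simp [show ψ a = ofAdd (-1) from ha]) (by simp [hb])⟩

theorem exists_comp_eq_standardHom (hψ : Function.Surjective ψ) :
    ∃ α : F₂ ≃* F₂, ψ.comp α.toMonoidHom = standardHom := by
  induction h : (toAdd (ψ b)).natAbs using Nat.strong_induction_on generalizing ψ with
  | _ n ih =>
  by_cases hb : ψ b = 1
  · exact exists_comp_eq_standardHom_of_map_b_eq_one ψ hψ hb
  set q := toAdd (ψ b)
  have hq : q ≠ 0 := hb
  set ψ' := ψ.comp (shear (toAdd (ψ a) / q)).toMonoidHom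
  have hψ' : toAdd (ψ' b) = toAdd (ψ a) % q := by
    simp [ψ', Int.emod_def, q, sub_eq_add_neg, mul_comm]
  have hlt : (toAdd (ψ' b)).natAbs < n := by
    have := Int.emod_lt (toAdd (ψ a)) hq
    have := Int.emod_nonneg (toAdd (ψ a)) hq
    omega
  obtain ⟨α, hα⟩ := ih _ hlt ψ' (hψ.comp (shear _).surjective) rfl
  exact ⟨α.trans (shear _), hα⟩

end Nielsen

section Semidirect

open SemidirectProduct

def shiftAut : Multiplicative ℤ →* MulAut (FreeGroup ℤ) where
  toFun n := FreeGroup.freeGroupCongr (Equiv.addRight (toAdd n))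
  map_one' := MulEquiv.toMonoidHom_injective (FreeGroup.ext_hom _ _ fun _ => by simp)
  map_mul' _ _ := MulEquiv.toMonoidHom_injective
    (FreeGroup.ext_hom _ _ fun _ => by simp [add_comm, add_left_comm])

@[simp] lemma shiftAut_of (n : Multiplicative ℤ) (m : ℤ) :
    shiftAut n (FreeGroup.of m) = FreeGroup.of (m + toAdd n) := by
  simp [shiftAut]

def conjB : FreeGroup ℤ →* F₂ := FreeGroup.lift fun m => a ^ m * b * a ^ (-m)

@[simp] lemma conjB_of (m : ℤ) : conjB (FreeGroup.of m) = a ^ m * b * a ^ (-m) := by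
  simp [conjB]

lemma conjB_comp_shiftAut (n : Multiplicative ℤ) :
    conjB.comp (shiftAut n).toMonoidHom =
      (MulAut.conj (zpowersHom F₂ a n)).toMonoidHom.comp conjB := by
  refine FreeGroup.ext_hom _ _ fun m => ?_
  simp only [MonoidHom.comp_apply, MulEquiv.coe_toMonoidHom, shiftAut_of, conjB_of,
    MulAut.conj_apply, zpowersHom_apply, zpow_add, neg_add]
  group

def toSemidirect : F₂ →* FreeGroup ℤ ⋊[shiftAut] Multiplicative ℤ :=
  FreeGroup.lift ![inr (ofAdd 1), inl (FreeGroup.of 0)]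

@[simp] lemma toSemidirect_a : toSemidirect a = inr (ofAdd 1) := lift_a _ _

@[simp] lemma toSemidirect_b : toSemidirect b = inl (FreeGroup.of 0) := lift_b _ _

def ofSemidirect : FreeGroup ℤ ⋊[shiftAut] Multiplicative ℤ →* F₂ :=
  SemidirectProduct.lift conjB (zpowersHom _ a) conjB_comp_shiftAut

lemma ofSemidirect_comp_toSemidirect : ofSemidirect.comp toSemidirect = MonoidHom.id F₂ :=
  hom_ext
    (by rw [MonoidHom.comp_apply, toSemidirect_a, ofSemidirect, SemidirectProduct.lift_inr]; simp)
    (by rw [MonoidHom.comp_apply, toSemidirect_b, ofSemidirect, SemidirectProduct.lift_inl]; simp)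

lemma toSemidirect_comp_conjB : toSemidirect.comp conjB = inl := by
  refine FreeGroup.ext_hom _ _ fun m => ?_
  have h (k : ℤ) : toSemidirect (a ^ k) = inr (ofAdd k) := by
    rw [map_zpow, toSemidirect_a, ← map_zpow, ← Int.ofAdd_mul, one_mul]
  rw [MonoidHom.comp_apply, conjB_of, map_mul, map_mul, h, h, toSemidirect_b, ofAdd_neg,
    ← inl_aut, shiftAut_of, zero_add, toAdd_ofAdd]

lemma rightHom_comp_toSemidirect : rightHom.comp toSemidirect = standardHom :=
  hom_ext (by simp [toSemidirect]) (by simp [toSemidirect])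

lemma conjB_injective : Function.Injective conjB := by
  refine Function.Injective.of_comp (f := toSemidirect) ?_
  rw [← MonoidHom.coe_comp, toSemidirect_comp_conjB]
  exact inl_injective

lemma range_conjB : conjB.range = standardHom.ker := by
  ext g
  rw [MonoidHom.mem_ker, ← rightHom_comp_toSemidirect, MonoidHom.comp_apply, ← MonoidHom.mem_ker,
    ← range_inl_eq_ker_rightHom]
  constructor
  · rintro ⟨x, rfl⟩
    exact ⟨x, by rw [← MonoidHom.comp_apply, toSemidirect_comp_conjB]⟩
  · rintro ⟨x, hx⟩
    refine ⟨x, ?_⟩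
    simpa [ofSemidirect, SemidirectProduct.lift_inl, ← hx] using
      DFunLike.congr_fun ofSemidirect_comp_toSemidirect g

end Semidirect

section Abelianization

open LaurentPolynomial

variable {ψ : F₂ →* Multiplicative ℤ} {α : F₂ ≃* F₂}

lemma range_comp_conjB (hα : ψ.comp α.toMonoidHom = standardHom) :
    (α.toMonoidHom.comp conjB).range = ψ.ker := by
  ext g
  have h : ψ g = standardHom (α.symm g) := by simpa using DFunLike.congr_fun hα (α.symm g)
  rw [MonoidHom.mem_ker, h, ← MonoidHom.mem_ker, ← range_conjB]
  simp only [MonoidHom.mem_range, MonoidHom.comp_apply, MulEquiv.coe_toMonoidHom,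
    MulEquiv.eq_symm_apply]

noncomputable def kerEquiv (hα : ψ.comp α.toMonoidHom = standardHom) : FreeGroup ℤ ≃* ψ.ker :=
  (MonoidHom.ofInjective (f := α.toMonoidHom.comp conjB) (α.injective.comp conjB_injective)).trans
    (MulEquiv.subgroupCongr (range_comp_conjB hα))

@[simp] lemma coe_kerEquiv (hα : ψ.comp α.toMonoidHom = standardHom) (x : FreeGroup ℤ) :
    (kerEquiv hα x : F₂) = α (conjB x) :=
  rfl

lemma kerEquiv_shiftAut (hα : ψ.comp α.toMonoidHom = standardHom) (x : FreeGroup ℤ) :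
    kerEquiv hα (shiftAut (ofAdd 1) x) = conjKer ψ (α a) (kerEquiv hα x) := by
  have h := DFunLike.congr_fun (conjB_comp_shiftAut (ofAdd 1)) x
  simp only [MonoidHom.comp_apply, MulEquiv.coe_toMonoidHom, zpowersHom_apply, toAdd_ofAdd,
    zpow_one, MulAut.conj_apply] at h
  ext
  simp [conjKer, h]

lemma kerEquiv_symm_conjAb (hα : ψ.comp α.toMonoidHom = standardHom) (x : Abelianization ψ.ker) :
    (kerEquiv hα).symm.abelianizationCongr (conjAb ψ (α a) x) =
      Abelianization.map (shiftAut (ofAdd 1)).toMonoidHom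
        ((kerEquiv hα).symm.abelianizationCongr x) := by
  refine DFunLike.congr_fun (Abelianization.hom_ext
    ((kerEquiv hα).symm.abelianizationCongr.toMonoidHom.comp (conjAb ψ (α a)))
    ((Abelianization.map (shiftAut (ofAdd 1)).toMonoidHom).comp
      (kerEquiv hα).symm.abelianizationCongr.toMonoidHom) (MonoidHom.ext fun k => ?_)) x
  obtain ⟨y, rfl⟩ := (kerEquiv hα).surjective k
  simp [conjAb, Abelianization.map_of, ← kerEquiv_shiftAut]

noncomputable def laurentEquiv : FreeAbelianGroup ℤ ≃+ LaurentPolynomial ℤ :=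
  (FreeAbelianGroup.equivFinsupp ℤ).trans AddMonoidAlgebra.coeffAddEquiv.symm

@[simp] lemma laurentEquiv_of (m : ℤ) : laurentEquiv (FreeAbelianGroup.of m) = T m := by
  simp [laurentEquiv]

lemma laurentEquiv_map_shiftAut (y : Abelianization (FreeGroup ℤ)) :
    laurentEquiv (Additive.ofMul (Abelianization.map (shiftAut (ofAdd 1)).toMonoidHom y)) =
      T 1 * laurentEquiv (Additive.ofMul y) := by
  refine DFunLike.congr_fun (FreeAbelianGroup.lift_ext
    (laurentEquiv.toAddMonoidHom.comp
      (MonoidHom.toAdditive (Abelianization.map (shiftAut (ofAdd 1)).toMonoidHom)))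
    ((AddMonoidHom.mulLeft (T 1)).comp laurentEquiv.toAddMonoidHom) fun m => ?_) y
  change laurentEquiv (FreeAbelianGroup.of (m + 1)) = T 1 * laurentEquiv (FreeAbelianGroup.of m)
  rw [laurentEquiv_of, laurentEquiv_of, add_comm, T_add]

noncomputable def abelianizationKerEquiv (hα : ψ.comp α.toMonoidHom = standardHom) :
    Additive (Abelianization ψ.ker) ≃+ LaurentPolynomial ℤ :=
  (MulEquiv.toAdditive (kerEquiv hα).symm.abelianizationCongr).trans laurentEquiv

lemma abelianizationKerEquiv_conjAb (hα : ψ.comp α.toMonoidHom = standardHom)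
    (x : Abelianization ψ.ker) :
    abelianizationKerEquiv hα (Additive.ofMul (conjAb ψ (α a) x)) =
      T 1 * abelianizationKerEquiv hα (Additive.ofMul x) :=
  (congrArg (laurentEquiv ∘ Additive.ofMul) (kerEquiv_symm_conjAb hα x)).trans
    (laurentEquiv_map_shiftAut _)

end Abelianization

end FreeGroupRankTwo

open FreeGroupRankTwo

/-- For a surjection `ψ : F(2) → ℤ`, the abelianization of `ker ψ`, with its conjugation
`ℤ[ℤ] = ℤ[t,t⁻¹]`-module structure, is a free module of rank 1. -/
theorem stmt4 (ψ : FreeGroup (Fin 2) →* Multiplicative ℤ) (hψ : Function.Surjective ψ) :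
    ∃ inst : Module (LaurentPolynomial ℤ) (Additive (Abelianization ψ.ker)),
      FreeRankOneWithConjAction ψ inst := by
  obtain ⟨α, hα⟩ := exists_comp_eq_standardHom ψ hψ
  let E := abelianizationKerEquiv hα
  let inst := E.module (LaurentPolynomial ℤ)
  refine ⟨inst, fun h x hh => E.injective ?_, ⟨E.linearEquiv _⟩⟩
  have hh' : ψ h = ψ (α a) := by simpa [hh] using (DFunLike.congr_fun hα a).symm
  rw [conjAb_congr ψ hh', abelianizationKerEquiv_conjAb]
  exact E.apply_symm_apply _
end

section
/- In the Laurent polynomial ring ℤ[t,t⁻¹,x,x⁻¹], the elements −t³x + t³ + t²x − 2tx² − t² + x² and t² − tx + x are relatively prime. -/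
/-!
Let `A, B` be the two elements and `d` a common divisor. Eliminating `x` (a resultant
computation) gives `d ∣ r` with `r ∈ ℤ[t,t⁻¹]` nonzero. Over a domain every divisor of a
nonzero constant of `R[x,x⁻¹]` is a monomial `c xᵏ`, so `d` is a unit iff its value `c` at
`x = 1` is. Setting `x = 1` turns `A, B` into `1 - 2t` and `t² - t + 1`, whence `c` divides
`4(t² - t + 1) - (1 - 2t)² = 3`.
By the same monomial argument `c` is a unit iff its value at `t = 1` is, and that value divides
`r(1) = -1`.
-/

namespace Polynomial

theorem eq_C_mul_X_pow_of_natDegree_le_natTrailingDegree {R : Type*} [Semiring R] {p : R[X]}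
    (h : p.natDegree ≤ p.natTrailingDegree) : p = C p.leadingCoeff * X ^ p.natDegree := by
  ext n
  rw [coeff_C_mul_X_pow]
  obtain hn | rfl | hn := lt_trichotomy n p.natDegree
  · rw [if_neg hn.ne, coeff_eq_zero_of_lt_natTrailingDegree (hn.trans_le h)]
  · rw [if_pos rfl, coeff_natDegree]
  · rw [if_neg hn.ne', coeff_eq_zero_of_natDegree_lt hn]

theorem exists_eq_C_mul_X_pow_of_dvd_C_mul_X_pow {R : Type*} [Semiring R] [NoZeroDivisors R]
    {a : R} (ha : a ≠ 0) {N : ℕ} {p : R[X]} (hp : p ∣ C a * X ^ N) :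
    ∃ (c : R) (k : ℕ), p = C c * X ^ k := by
  have : Nontrivial R := ⟨⟨a, 0, ha⟩⟩
  obtain ⟨q, hq⟩ := hp
  have hmon : C a * X ^ N ≠ 0 := mul_ne_zero (C_ne_zero.2 ha) (pow_ne_zero _ X_ne_zero)
  have hp0 : p ≠ 0 := by rintro rfl; exact hmon (by rw [hq, zero_mul])
  have hq0 : q ≠ 0 := by rintro rfl; exact hmon (by rw [hq, mul_zero])
  have hdeg := natDegree_mul hp0 hq0
  have htrail := natTrailingDegree_mul hp0 hq0
  rw [← hq, natDegree_C_mul_X_pow N a ha] at hdeg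
  rw [← hq, C_mul_X_pow_eq_monomial, natTrailingDegree_monomial ha] at htrail
  have := natTrailingDegree_le_natDegree p
  have := natTrailingDegree_le_natDegree q
  exact ⟨_, _, eq_C_mul_X_pow_of_natDegree_le_natTrailingDegree (by omega)⟩

end Polynomial

namespace LaurentPolynomial

variable {R : Type*} [CommRing R] [NoZeroDivisors R]

theorem exists_eq_C_mul_T_of_dvd_C {a : R} (ha : a ≠ 0) {d : R[T;T⁻¹]} (hd : d ∣ C a) :
    ∃ (c : R) (k : ℤ), d = C c * T k := by
  obtain ⟨e, he⟩ := hd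
  obtain ⟨n, p, hp⟩ := exists_T_pow d
  obtain ⟨m, q, hq⟩ := exists_T_pow e
  have hpq : p * q = Polynomial.C a * Polynomial.X ^ (n + m) := by
    apply Polynomial.toLaurent_injective
    rw [map_mul, hp, hq, map_mul, Polynomial.toLaurent_C, Polynomial.toLaurent_X_pow, he]
    push_cast
    rw [T_add]
    ring
  obtain ⟨c, k, rfl⟩ := Polynomial.exists_eq_C_mul_X_pow_of_dvd_C_mul_X_pow ha ⟨q, hpq.symm⟩
  refine ⟨c, k - n, ?_⟩
  rw [map_mul, Polynomial.toLaurent_C, Polynomial.toLaurent_X_pow] at hp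
  rw [sub_eq_add_neg, ← mul_T_assoc, hp, mul_T_assoc, add_neg_cancel, T_zero, mul_one]

theorem isUnit_of_dvd_C {a : R} (ha : a ≠ 0) {d : R[T;T⁻¹]} (hd : d ∣ C a)
    (h1 : IsUnit (eval₂ (RingHom.id R) 1 d)) : IsUnit d := by
  obtain ⟨c, k, rfl⟩ := exists_eq_C_mul_T_of_dvd_C ha hd
  rw [map_mul, eval₂_C, eval₂_T, one_zpow, Units.val_one, mul_one] at h1
  exact (h1.map C).mul (isUnit_T k)

end LaurentPolynomial

open LaurentPolynomial in
/-- In the two-variable Laurent polynomial ring `ℤ[t,t⁻¹,x,x⁻¹]` (realized as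
`ℤ[t,t⁻¹][x,x⁻¹]`, with `t = C (T 1)` and `x = T 1`), the elements
`−t³x + t³ + t²x − 2tx² − t² + x²` and `t² − tx + x` are relatively prime. -/
theorem stmt10 :
    letI t : LaurentPolynomial (LaurentPolynomial ℤ) := LaurentPolynomial.C (T 1)
    letI x : LaurentPolynomial (LaurentPolynomial ℤ) := T 1
    IsRelPrime (-t ^ 3 * x + t ^ 3 + t ^ 2 * x - 2 * t * x ^ 2 - t ^ 2 + x ^ 2)
      (t ^ 2 - t * x + x) := by
  intro d hA hB
  set ev₁ : LaurentPolynomial ℤ →+* ℤ := eval₂ (RingHom.id ℤ) 1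
  set ev₂ : LaurentPolynomial (LaurentPolynomial ℤ) →+* LaurentPolynomial ℤ :=
    eval₂ (RingHom.id _) 1
  set τ : LaurentPolynomial ℤ := T 1
  -- the resultant of the two elements with respect to `x`
  set r : LaurentPolynomial ℤ := -τ ^ 6 + τ ^ 5 - 3 * τ ^ 4 + 3 * τ ^ 3 - τ ^ 2
  have hr : d ∣ C r := by
    convert dvd_sub (hA.mul_left ((1 - C τ) ^ 2))
      (hB.mul_left ((1 - C τ) * (1 - 2 * C τ) * T 1 + C τ ^ 4)) using 1
    simp only [r, map_add, map_sub, map_neg, map_mul, map_pow, map_ofNat]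
    ring
  have hr1 : ev₁ r = -1 := by simp [r, ev₁, τ]
  refine isUnit_of_dvd_C (fun h ↦ by simp [h] at hr1) hr ?_
  have hA₁ : ev₂ d ∣ 1 - 2 * τ := by
    convert map_dvd ev₂ hA using 1
    simp only [ev₂, map_add, map_sub, map_neg, map_mul, map_pow, map_ofNat, eval₂_C, eval₂_T,
      one_zpow, Units.val_one, RingHom.id_apply]
    ring
  have hB₁ : ev₂ d ∣ τ ^ 2 - τ + 1 := by
    convert map_dvd ev₂ hB using 1
    simp [ev₂]
  have h3 : ev₂ d ∣ C 3 := by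
    convert dvd_sub (hB₁.mul_left 4) (hA₁.mul_left (1 - 2 * τ)) using 1
    simp only [map_ofNat]
    ring
  refine isUnit_of_dvd_C three_ne_zero h3 ?_
  have hdr := map_dvd ev₁ (map_dvd ev₂ hr)
  rw [eval₂_C] at hdr
  exact isUnit_of_dvd_unit hdr (hr1 ▸ isUnit_one.neg)
end

section
/- Over R = ℤ[a,a⁻¹,c,c⁻¹], the module M presented by generators B, D, Θ and relations (a+c−1)B + a(a−1)D + (a−1)Θ = 0 and c(1−c)B + D + (c−1)Θ = 0 is isomorphic to the module presented by generators α, β with the single relation (ac+a−1)α + 2a²c·β = 0, and hence is torsion-free. -/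
/-!
Explicit maps between the free modules, mutually inverse modulo the relations, give the
isomorphism over any commutative ring. For torsion-freeness of `R² ⧸ (p, q)`: if `r • (x, y)`
lies in `R ∙ (p, q)` with `r ≠ 0`, then `p y = q x`; as `q = 2a²c` is primal and coprime to
`p = ac + a - 1`, the vector `(x, y)` is itself a multiple of `(p, q)`. Coprimality holds
because `2` stays prime in the localization `ℤ[a,a⁻¹,c,c⁻¹]` of `ℤ[a, c]`, while `p` takes the
odd value `1` at `a = c = 1`.
-/

namespace Submodule

variable {A V W : Type*} [CommRing A] [AddCommGroup V] [Module A V] [AddCommGroup W] [Module A W]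
  {S : Submodule A V} {T : Submodule A W}

def quotEquivOfInverse (F : V →ₗ[A] W) (G : W →ₗ[A] V) (hF : S ≤ T.comap F)
    (hG : T ≤ S.comap G) (hGF : ∀ x, G (F x) - x ∈ S) (hFG : ∀ y, F (G y) - y ∈ T) :
    (V ⧸ S) ≃ₗ[A] (W ⧸ T) :=
  .ofLinearMap (f := S.mapQ T F hF) (g := T.mapQ S G hG)
    (linearMap_qext _ <| LinearMap.ext fun y ↦ (Quotient.eq T).mpr (hFG y))
    (linearMap_qext _ <| LinearMap.ext fun x ↦ (Quotient.eq S).mpr (hGF x))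

end Submodule

open LaurentPolynomial in
theorem LaurentPolynomial.prime_C {A : Type*} [CommRing A] {p : A} (hp : Prime p) :
    Prime (C p : A[T;T⁻¹]) := by
  have hCp : Prime (Polynomial.C p) := Polynomial.prime_C_iff.mpr hp
  have hX : (Polynomial.X : Polynomial A) ∉ Ideal.span {Polynomial.C p} := fun h ↦ by
    rw [Ideal.mem_span_singleton, Polynomial.C_dvd_iff_dvd_coeff] at h
    exact hp.not_isUnit (isUnit_of_dvd_one (by simpa using h 1))
  have hspan := (Ideal.span_singleton_prime hCp.ne_zero).mpr hCp
  have hmap := IsLocalization.isPrime_of_isPrime_disjoint (Submonoid.powers Polynomial.X)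
    A[T;T⁻¹] _ hspan ((Ideal.disjoint_powers_iff_notMem_of_isPrime _).mpr hX)
  rw [Ideal.map_span, Set.image_singleton, algebraMap_eq_toLaurent] at hmap
  rw [← Polynomial.toLaurent_C]
  exact (Ideal.span_singleton_prime (Polynomial.toLaurent_ne_zero.mpr hCp.ne_zero)).mp hmap

theorem isTorsionFree_quotient_span_singleton_of_isRelPrime {R : Type*} [CommRing R] [IsDomain R]
    {p q : R} (hq : q ≠ 0) (hpq : IsRelPrime p q) (hq_primal : IsPrimal q) :
    Module.IsTorsionFree R ((Fin 2 → R) ⧸ Submodule.span R {![p, q]}) := by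
  refine .of_smul_eq_zero fun r m hrm ↦ or_iff_not_imp_left.mpr fun hr ↦ ?_
  obtain ⟨x, rfl⟩ := Submodule.Quotient.mk_surjective _ m
  rw [← Submodule.Quotient.mk_smul, Submodule.Quotient.mk_eq_zero,
    Submodule.mem_span_singleton] at hrm
  obtain ⟨s, hs⟩ := hrm
  have h0 : s * p = r * x 0 := by simpa using congrFun hs 0
  have h1 : s * q = r * x 1 := by simpa using congrFun hs 1
  have hcross : p * x 1 = q * x 0 := mul_left_cancel₀ hr (by linear_combination q * h0 - p * h1)
  obtain ⟨t, ht⟩ := hpq.symm.dvd_of_dvd_mul_left_of_isPrimal ⟨x 0, hcross⟩ hq_primal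
  have hx0 : x 0 = t * p := mul_left_cancel₀ hq (by linear_combination p * ht - hcross)
  rw [Submodule.Quotient.mk_eq_zero, Submodule.mem_span_singleton]
  exact ⟨t, by ext i; fin_cases i <;> simp [hx0, ht, mul_comm]⟩

def reducedPresentationEquiv {A : Type*} [CommRing A] (a c : A) :
    ((Fin 3 → A) ⧸
        Submodule.span A {![a + c - 1, a * (a - 1), a - 1], ![c * (1 - c), 1, c - 1]}) ≃ₗ[A]
      ((Fin 2 → A) ⧸ Submodule.span A {![a * c + a - 1, 2 * a ^ 2 * c]}) := by
  -- The image of `G` avoids the second generator, which the second relation expresses through the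
  -- other two; so `G ∘ F` is the identity only modulo that relation.
  set F := Matrix.toLin' !![1, 0, c; a + 1, c - 1, a * c + c - 1]
  set G := Matrix.toLin' !![1 - c - a * c, c; 0, 0; a + 1, -1]
  have hF₁ : F ![a + c - 1, a * (a - 1), a - 1] = ![a * c + a - 1, 2 * a ^ 2 * c] := by
    ext i; fin_cases i <;> simp [F] <;> ring
  have hF₂ : F ![c * (1 - c), 1, c - 1] = 0 := by
    ext i; fin_cases i <;> simp [F] <;> ring
  have hG : G ![a * c + a - 1, 2 * a ^ 2 * c] =
      ![a + c - 1, a * (a - 1), a - 1] - (a * (a - 1)) • ![c * (1 - c), 1, c - 1] := by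
    ext i; fin_cases i <;> simp [G] <;> ring
  have hGF (x : Fin 3 → A) : G (F x) - x = -x 1 • ![c * (1 - c), 1, c - 1] := by
    ext i; fin_cases i <;> simp [F, G, Matrix.vecHead, Matrix.vecTail] <;> ring
  have hFG (y : Fin 2 → A) : F (G y) = y := by
    ext i; fin_cases i <;> simp [F, G, Matrix.vecHead, Matrix.vecTail] <;> ring
  refine Submodule.quotEquivOfInverse F G ?_ ?_ (fun x ↦ ?_) (fun y ↦ ?_)
  · rw [Submodule.span_le, Set.insert_subset_iff, Set.singleton_subset_iff]
    simp only [SetLike.mem_coe, Submodule.mem_comap, hF₁, hF₂]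
    exact ⟨Submodule.mem_span_singleton_self _, zero_mem _⟩
  · rw [Submodule.span_le, Set.singleton_subset_iff, SetLike.mem_coe, Submodule.mem_comap, hG]
    exact sub_mem (Submodule.subset_span (by simp))
      (Submodule.smul_mem _ _ (Submodule.subset_span (by simp)))
  · rw [hGF]
    exact Submodule.smul_mem _ _ (Submodule.subset_span (by simp))
  · rw [hFG, sub_self]
    exact zero_mem _

open LaurentPolynomial in
/-- Over `R = ℤ[a,a⁻¹,c,c⁻¹]` (realized as `ℤ[a,a⁻¹][c,c⁻¹]`, `a = C (T 1)`, `c = T 1`),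
the module presented by generators `B, D, Θ` and relations
`(a+c−1)B + a(a−1)D + (a−1)Θ = 0`, `c(1−c)B + D + (c−1)Θ = 0` is isomorphic to the module
presented by two generators and the single relation `(ac+a−1)α + 2a²c·β = 0`; and it is
torsion-free. -/
theorem stmt11 :
    letI R := LaurentPolynomial (LaurentPolynomial ℤ)
    letI a : R := LaurentPolynomial.C (T 1)
    letI c : R := T 1
    letI M := (Fin 3 → R) ⧸
      Submodule.span R {![a + c - 1, a * (a - 1), a - 1], ![c * (1 - c), 1, c - 1]}
    letI N := (Fin 2 → R) ⧸ Submodule.span R {![a * c + a - 1, 2 * a ^ 2 * c]}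
    Nonempty (M ≃ₗ[R] N) ∧ ∀ (r : R) (m : M), r • m = 0 → r = 0 ∨ m = 0 := by
  set a : ℤ[T;T⁻¹][T;T⁻¹] := C (T 1)
  set c : ℤ[T;T⁻¹][T;T⁻¹] := T 1
  let e := reducedPresentationEquiv a c
  have hprime : Prime (2 : ℤ[T;T⁻¹][T;T⁻¹]) := by
    simpa only [map_ofNat] using prime_C (prime_C Int.prime_two)
  have hodd : ¬(2 : ℤ[T;T⁻¹][T;T⁻¹]) ∣ a * c + a - 1 := fun h ↦ by
    have := map_dvd (eval₂ (eval₂ (RingHom.id ℤ) 1) 1) h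
    rw [map_ofNat] at this
    simp [a, c] at this
  have ha : IsUnit a := (isUnit_T 1).map C
  have hc : IsUnit c := isUnit_T 1
  have hrel : IsRelPrime (a * c + a - 1) (2 * a ^ 2 * c) := by
    rw [isRelPrime_mul_unit_right_right hc, isRelPrime_mul_unit_right_right (ha.pow 2),
      isRelPrime_comm]
    exact hprime.irreducible.isRelPrime_iff_not_dvd.mpr hodd
  have := isTorsionFree_quotient_span_singleton_of_isRelPrime
    (by simp [hprime.ne_zero, ha.ne_zero, hc.ne_zero]) hrel
    ((hprime.isPrimal.mul (ha.pow 2).isPrimal).mul hc.isPrimal)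
  have := e.injective.moduleIsTorsionFree e (map_smul e)
  exact ⟨⟨e⟩, fun r m ↦ smul_eq_zero.mp⟩
end

section
/- Let n ≥ 2 and let ψ : F(n) → ℤⁿ be the abelianization of the free group of rank n, with K = ker(ψ). Then the ℤ[ℤⁿ]-module K/[K,K] is not a projective ℤ[ℤⁿ]-module when n ≥ 3. -/
/-- A `ℤ[ℤⁿ]`-module structure on `K/[K,K]` (where `K = ker ψ`) is the conjugation module
structure if the group element `ψ h` acts by conjugation by `h`. -/
def IsConjModuleStructure (n : ℕ) (ψ : FreeGroup (Fin n) →* Multiplicative (Fin n → ℤ))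
    (inst : Module (MonoidAlgebra ℤ (Multiplicative (Fin n → ℤ)))
      (Additive (Abelianization ψ.ker))) : Prop :=
  letI := inst
  ∀ (h : FreeGroup (Fin n)) (x : Abelianization ψ.ker),
    (MonoidAlgebra.of ℤ (Multiplicative (Fin n → ℤ)) (ψ h)) • (Additive.ofMul x) =
      Additive.ofMul (conjAb ψ h x)

/-- The statement that `K/[K,K]` with a given module structure is projective over `ℤ[ℤⁿ]`. -/
def ConjModuleProjective (n : ℕ) (ψ : FreeGroup (Fin n) →* Multiplicative (Fin n → ℤ))
    (inst : Module (MonoidAlgebra ℤ (Multiplicative (Fin n → ℤ)))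
      (Additive (Abelianization ψ.ker))) : Prop :=
  letI := inst
  Module.Projective (MonoidAlgebra ℤ (Multiplicative (Fin n → ℤ)))
    (Additive (Abelianization ψ.ker))

/-!
Write `M = K/[K,K]` additively, `q(u, v)` for the class of `⁅u, v⁆`, and `a, b, c` for the images
in `ℤ[ℤⁿ]` of the generators `x₀, x₁, x₂`. Since `q(u, vw) = q(u, v) + v • q(u, w)`, expanding
`q(x₀, ⁅x₁, x₂⁆ x₂ x₁) = q(x₀, x₁ x₂)` gives
`(a - 1) • q(x₁, x₂) = (1 - c) • q(x₀, x₁) + (b - 1) • q(x₀, x₂)`.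

As `ψ` maps onto `ℤⁿ`, `K` is the commutator subgroup, so every homomorphism from `F(n)` to an
abelian group factors through `ψ`. In particular there is a ring map `ℤ[ℤⁿ] → ℤ[t, t⁻¹]` with
`a ↦ t`, `b, c ↦ 1`; its kernel `I` is prime, contains `b - 1` and `c - 1` but not `a - 1`.
A projective module is a summand of a free one, so `M / I M` has no `ℤ[ℤⁿ] / I`-torsion and the
relation forces `q(x₁, x₂) ∈ I M`. But sending `x₁, x₂` to the standard generators of the
Heisenberg group and the other generators to `1` maps `K` into the centre, and the central
coordinate is a conjugation-invariant functional `M → ℤ`: it vanishes on `I M`, yet equals `1`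
at `q(x₁, x₂)`.
-/

open scoped commutatorElement

theorem Module.Projective.mem_smul_top_of_smul_mem {R M : Type*} [CommRing R] [AddCommGroup M]
    [Module R M] [Module.Projective R M] {I : Ideal R} [hI : I.IsPrime] {r : R} {m : M}
    (hr : r ∉ I) (hrm : r • m ∈ I • (⊤ : Submodule R M)) : m ∈ I • (⊤ : Submodule R M) := by
  obtain ⟨s, hs⟩ := Module.projective_def.mp ‹_›
  have coord_mem : ∀ x ∈ I • (⊤ : Submodule R M), ∀ v, s x v ∈ I := by
    intro x hx
    refine Submodule.smul_induction_on hx (fun a ha y _ v => ?_) fun x y hx hy v => ?_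
    · simpa using I.mul_mem_right (s y v) ha
    · simpa using I.add_mem (hx v) (hy v)
  have coord_mem_of_smul : ∀ v, s m v ∈ I := fun v =>
    (hI.mem_or_mem (by simpa using coord_mem _ hrm v)).resolve_left hr
  rw [← hs m, Finsupp.linearCombination_apply]
  exact Submodule.sum_mem _ fun v _ => Submodule.smul_mem_smul (coord_mem_of_smul v) trivial

namespace MonoidAlgebra

variable {Γ Γ' M A : Type*} [AddCommGroup M] [AddCommGroup A]

theorem map_smul_eq_lift_one_smul [Monoid Γ] [Module (MonoidAlgebra ℤ Γ) M] (f : M →+ A)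
    (hf : ∀ γ m, f (of ℤ Γ γ • m) = f m) (r : MonoidAlgebra ℤ Γ) (m : M) :
    f (r • m) = lift ℤ ℤ Γ 1 r • f m := by
  induction r using MonoidAlgebra.induction_linear with
  | zero => simp
  | add r r' hr hr' => simp [add_smul, hr, hr']
  | single γ z =>
    rw [← mul_one z, ← smul_eq_mul, ← smul_single, smul_assoc, map_zsmul, ← of_apply, hf]
    simp

theorem lift_one_mapDomainRingHom [Monoid Γ] [Monoid Γ'] (χ : Γ →* Γ') (r : MonoidAlgebra ℤ Γ) :
    lift ℤ ℤ Γ' 1 (mapDomainRingHom ℤ χ r) = lift ℤ ℤ Γ 1 r := by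
  induction r using MonoidAlgebra.induction_linear with
  | zero => simp
  | add r r' hr hr' => rw [map_add, map_add, map_add, hr, hr']
  | single γ z => simp

theorem of_sub_one_mem_ker_mapDomainRingHom_iff [Monoid Γ] [Monoid Γ'] (χ : Γ →* Γ') (γ : Γ) :
    of ℤ Γ γ - 1 ∈ RingHom.ker (mapDomainRingHom ℤ χ) ↔ χ γ = 1 := by
  rw [RingHom.mem_ker, map_sub, map_one, sub_eq_zero, ← (of_injective (R := ℤ) (M := Γ')).eq_iff,
    map_one]
  simp

theorem map_eq_zero_of_mem_ker_mapDomainRingHom_smul_top [CommMonoid Γ] [CommMonoid Γ']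
    [Module (MonoidAlgebra ℤ Γ) M] (χ : Γ →* Γ') (f : M →+ A)
    (hf : ∀ γ m, f (of ℤ Γ γ • m) = f m) {m : M}
    (hm : m ∈ RingHom.ker (mapDomainRingHom ℤ χ) • (⊤ : Submodule (MonoidAlgebra ℤ Γ) M)) :
    f m = 0 := by
  refine Submodule.smul_induction_on hm (fun r hr n _ => ?_) fun x y hx hy => ?_
  · rw [map_smul_eq_lift_one_smul f hf, ← lift_one_mapDomainRingHom χ, RingHom.mem_ker.mp hr,
      map_zero, zero_smul]
  · rw [map_add, hx, hy, add_zero]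

end MonoidAlgebra

/-- `⟨x, y, z⟩` is the matrix `!![1, x, z; 0, 1, y; 0, 0, 1]`. -/
@[ext]
structure Heisenberg where
  x : ℤ
  y : ℤ
  z : ℤ

namespace Heisenberg

instance : Mul Heisenberg := ⟨fun g h => ⟨g.x + h.x, g.y + h.y, g.z + h.z + g.x * h.y⟩⟩
instance : One Heisenberg := ⟨⟨0, 0, 0⟩⟩
instance : Inv Heisenberg := ⟨fun g => ⟨-g.x, -g.y, -g.z + g.x * g.y⟩⟩

@[simp] lemma mul_x (g h : Heisenberg) : (g * h).x = g.x + h.x := rfl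
@[simp] lemma mul_y (g h : Heisenberg) : (g * h).y = g.y + h.y := rfl
@[simp] lemma mul_z (g h : Heisenberg) : (g * h).z = g.z + h.z + g.x * h.y := rfl
@[simp] lemma one_x : (1 : Heisenberg).x = 0 := rfl
@[simp] lemma one_y : (1 : Heisenberg).y = 0 := rfl
@[simp] lemma one_z : (1 : Heisenberg).z = 0 := rfl
@[simp] lemma inv_x (g : Heisenberg) : g⁻¹.x = -g.x := rfl
@[simp] lemma inv_y (g : Heisenberg) : g⁻¹.y = -g.y := rfl
@[simp] lemma inv_z (g : Heisenberg) : g⁻¹.z = -g.z + g.x * g.y := rfl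

instance : Group Heisenberg where
  mul_assoc _ _ _ := by ext <;> simp <;> ring
  one_mul _ := by ext <;> simp
  mul_one _ := by ext <;> simp
  inv_mul_cancel _ := by ext <;> simp

def proj : Heisenberg →* Multiplicative (ℤ × ℤ) where
  toFun g := .ofAdd (g.x, g.y)
  map_one' := rfl
  map_mul' _ _ := rfl

lemma x_eq_zero_of_proj_eq_one {g : Heisenberg} (hg : proj g = 1) : g.x = 0 :=
  congrArg Prod.fst hg

lemma y_eq_zero_of_proj_eq_one {g : Heisenberg} (hg : proj g = 1) : g.y = 0 :=
  congrArg Prod.snd hg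

lemma conj_eq_self_of_proj_eq_one (g : Heisenberg) {h : Heisenberg} (hh : proj h = 1) :
    g * h * g⁻¹ = h := by
  have hx := x_eq_zero_of_proj_eq_one hh
  have hy := y_eq_zero_of_proj_eq_one hh
  ext <;> simp [hx, hy]; ring

lemma mul_z_of_proj_eq_one {g : Heisenberg} (hg : proj g = 1) (h : Heisenberg) :
    (g * h).z = g.z + h.z := by
  simp [x_eq_zero_of_proj_eq_one hg]

lemma commutatorElement_z : (⁅(⟨1, 0, 0⟩ : Heisenberg), (⟨0, 1, 0⟩ : Heisenberg)⁆).z = 1 := by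
  simp [commutatorElement_def]

end Heisenberg

namespace FreeGroup

variable {α : Type*} [Finite α] {ψ : FreeGroup α →* Multiplicative (α → ℤ)}

theorem abelianization_lift_injective_of_surjective (hψ : Function.Surjective ψ) :
    Function.Injective (Abelianization.lift ψ) := by
  let L : FreeAbelianGroup α →ₗ[ℤ] (α → ℤ) :=
    (MonoidHom.toAdditiveLeft (Abelianization.lift ψ)).toIntLinearMap
  have hL : Function.Surjective L := fun v => by
    obtain ⟨g, hg⟩ := hψ (.ofAdd v)
    exact ⟨.ofMul (Abelianization.of g), hg⟩
  let e := (FreeAbelianGroup.basis α).equivFun.symm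
  have := OrzechProperty.injective_of_surjective_endomorphism (L ∘ₗ e.toLinearMap)
    (hL.comp e.surjective)
  exact (Function.Injective.of_comp_iff' L e.bijective).1 this

theorem map_eq_one_of_mem_ker {H : Type*} [CommGroup H] (hψ : Function.Surjective ψ)
    (χ : FreeGroup α →* H) {k : FreeGroup α} (hk : k ∈ ψ.ker) : χ k = 1 := by
  have : Abelianization.of k = 1 :=
    abelianization_lift_injective_of_surjective hψ (by simpa using hk)
  rw [← Abelianization.lift_apply_of χ, this, _root_.map_one]

theorem exists_comp_apply_eq {H : Type*} [CommGroup H] (hψ : Function.Surjective ψ)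
    (χ : FreeGroup α →* H) : ∃ χ' : Multiplicative (α → ℤ) →* H, ∀ g, χ' (ψ g) = χ g :=
  ⟨ψ.liftOfSurjective hψ ⟨χ, fun _ hk => map_eq_one_of_mem_ker hψ χ hk⟩,
    MonoidHom.liftOfRightInverse_comp_apply _ _ _ _⟩

end FreeGroup

section CommutatorClass

variable {G Γ : Type*} [Group G] [CommGroup Γ] (ψ : G →* Γ)

lemma MonoidHom.commutatorElement_mem_ker (u v : G) : ⁅u, v⁆ ∈ ψ.ker := by
  rw [MonoidHom.mem_ker, map_commutatorElement, commutatorElement_eq_one_iff_mul_comm]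
  exact mul_comm _ _

def commutatorClass (u v : G) : Additive (Abelianization ψ.ker) :=
  .ofMul (.of ⟨⁅u, v⁆, ψ.commutatorElement_mem_ker u v⟩)

def IsConjAction [Module (MonoidAlgebra ℤ Γ) (Additive (Abelianization ψ.ker))] : Prop :=
  ∀ h x, MonoidAlgebra.of ℤ Γ (ψ h) • Additive.ofMul x = .ofMul (conjAb ψ h x)

variable {ψ} [Module (MonoidAlgebra ℤ Γ) (Additive (Abelianization ψ.ker))]

lemma commutatorClass_mul_right (hconj : IsConjAction ψ) (u v w : G) :
    commutatorClass ψ u (v * w) =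
      commutatorClass ψ u v + MonoidAlgebra.of ℤ Γ (ψ v) • commutatorClass ψ u w := by
  have : (⟨⁅u, v * w⁆, ψ.commutatorElement_mem_ker u (v * w)⟩ : ψ.ker) =
      ⟨⁅u, v⁆, ψ.commutatorElement_mem_ker u v⟩ *
        conjKer ψ v ⟨⁅u, w⁆, ψ.commutatorElement_mem_ker u w⟩ :=
    Subtype.ext <| show _ = ⁅u, v⁆ * (v * ⁅u, w⁆ * v⁻¹) by simp only [commutatorElement_def]; group
  rw [commutatorClass, commutatorClass, commutatorClass, hconj, conjAb, Abelianization.map_of,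
    this, map_mul, ofMul_mul]

lemma commutatorClass_commutatorElement_right (hconj : IsConjAction ψ) (a b c : G) :
    commutatorClass ψ a ⁅b, c⁆ = (MonoidAlgebra.of ℤ Γ (ψ a) - 1) • commutatorClass ψ b c := by
  rw [sub_smul, one_smul, commutatorClass, commutatorClass, hconj, conjAb, Abelianization.map_of,
    ← ofMul_div, ← map_div]
  congr 2
  ext
  simp [conjKer, commutatorElement_def, div_eq_mul_inv]

theorem smul_commutatorClass_eq (hconj : IsConjAction ψ) (a b c : G) :
    (MonoidAlgebra.of ℤ Γ (ψ a) - 1) • commutatorClass ψ b c =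
      (1 - MonoidAlgebra.of ℤ Γ (ψ c)) • commutatorClass ψ a b +
        (MonoidAlgebra.of ℤ Γ (ψ b) - 1) • commutatorClass ψ a c := by
  have h := congrArg (commutatorClass ψ a) (show ⁅b, c⁆ * (c * b) = b * c by group)
  rw [commutatorClass_mul_right hconj, commutatorClass_mul_right hconj,
    commutatorClass_mul_right hconj, ψ.commutatorElement_mem_ker b c, map_one, one_smul,
    commutatorClass_commutatorElement_right hconj] at h
  linear_combination (norm := module) h

theorem commutatorClass_mem_ker_smul_top {Γ' : Type*} [CommGroup Γ']
    [IsDomain (MonoidAlgebra ℤ Γ')] [Module.Projective (MonoidAlgebra ℤ Γ)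
      (Additive (Abelianization ψ.ker))]
    (hconj : IsConjAction ψ) (χ : Γ →* Γ') {a b c : G} (ha : χ (ψ a) ≠ 1)
    (hb : χ (ψ b) = 1) (hc : χ (ψ c) = 1) :
    commutatorClass ψ b c ∈
      RingHom.ker (MonoidAlgebra.mapDomainRingHom ℤ χ) • (⊤ : Submodule (MonoidAlgebra ℤ Γ) _) := by
  have := RingHom.ker_isPrime (MonoidAlgebra.mapDomainRingHom ℤ χ)
  simp only [ne_eq, ← MonoidAlgebra.of_sub_one_mem_ker_mapDomainRingHom_iff χ] at ha hb hc
  refine Module.Projective.mem_smul_top_of_smul_mem ha ?_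
  rw [smul_commutatorClass_eq hconj, ← neg_sub]
  exact add_mem (Submodule.smul_mem_smul (neg_mem hc) trivial) (Submodule.smul_mem_smul hb trivial)

end CommutatorClass

section HeisenbergWeight

variable {G Γ : Type*} [Group G] [CommGroup Γ] {ψ : G →* Γ} (θ : G →* Heisenberg)
  (hθ : ∀ k ∈ ψ.ker, Heisenberg.proj (θ k) = 1)

def kerZCoord : ψ.ker →* Multiplicative ℤ where
  toFun k := .ofAdd (θ k).z
  map_one' := by simp
  map_mul' k k' := by
    simp only [Subgroup.coe_mul, map_mul, Heisenberg.mul_z_of_proj_eq_one (hθ k k.2)]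
    rfl

def heisenbergWeight : Additive (Abelianization ψ.ker) →+ ℤ :=
  (Abelianization.lift (kerZCoord θ hθ)).toAdditiveLeft

lemma heisenbergWeight_conjAb (h : G) (x : Abelianization ψ.ker) :
    heisenbergWeight θ hθ (.ofMul (conjAb ψ h x)) = heisenbergWeight θ hθ (.ofMul x) := by
  have : (Abelianization.lift (kerZCoord θ hθ)).comp (conjAb ψ h) =
      Abelianization.lift (kerZCoord θ hθ) := by
    ext k
    simp [conjAb, kerZCoord, conjKer, Heisenberg.conj_eq_self_of_proj_eq_one _ (hθ k k.2)]
  exact congrArg Multiplicative.toAdd (DFunLike.congr_fun this x)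

lemma heisenbergWeight_of_smul [Module (MonoidAlgebra ℤ Γ) (Additive (Abelianization ψ.ker))]
    (hψ : Function.Surjective ψ) (hconj : IsConjAction ψ) (γ : Γ)
    (m : Additive (Abelianization ψ.ker)) :
    heisenbergWeight θ hθ (MonoidAlgebra.of ℤ Γ γ • m) = heisenbergWeight θ hθ m := by
  obtain ⟨h, rfl⟩ := hψ γ
  exact (congrArg _ (hconj h m.toMul)).trans (heisenbergWeight_conjAb θ hθ h m.toMul)

lemma heisenbergWeight_commutatorClass (u v : G) :
    heisenbergWeight θ hθ (commutatorClass ψ u v) = (θ ⁅u, v⁆).z := rfl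

end HeisenbergWeight

def FreeGroup.toHeisenberg {α : Type*} [DecidableEq α] (i j : α) : FreeGroup α →* Heisenberg :=
  FreeGroup.lift fun k => if k = i then ⟨1, 0, 0⟩ else if k = j then ⟨0, 1, 0⟩ else 1

lemma FreeGroup.toHeisenberg_commutatorElement_z {α : Type*} [DecidableEq α] {i j : α}
    (hij : i ≠ j) : (toHeisenberg i j ⁅of i, of j⁆).z = 1 := by
  simp [toHeisenberg, map_commutatorElement, hij.symm, Heisenberg.commutatorElement_z]

/-- For `n ≥ 3` and `ψ : F(n) → ℤⁿ` the abelianization (any surjection), the conjugation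
`ℤ[ℤⁿ]`-module `K/[K,K]` (with `K = ker ψ`) is not projective. -/
theorem stmt12 (n : ℕ) (hn : 3 ≤ n)
    (ψ : FreeGroup (Fin n) →* Multiplicative (Fin n → ℤ)) (hψ : Function.Surjective ψ) :
    ∀ inst, IsConjModuleStructure n ψ inst → ¬ ConjModuleProjective n ψ inst := by
  intro inst hconj hproj
  have : Module.Projective _ _ := hproj
  let a : Fin n := ⟨0, by omega⟩
  let b : Fin n := ⟨1, by omega⟩
  let c : Fin n := ⟨2, by omega⟩
  obtain ⟨χ, hχ⟩ := FreeGroup.exists_comp_apply_eq hψ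
    (FreeGroup.lift fun k => Multiplicative.ofAdd (if k = a then (1 : ℤ) else 0))
  have hmem := commutatorClass_mem_ker_smul_top hconj χ (a := .of a) (b := .of b) (c := .of c)
    (by simp [hχ, a]) (by simp [hχ, a, b]) (by simp [hχ, a, c])
  let θ := FreeGroup.toHeisenberg b c
  have hθ : ∀ k ∈ ψ.ker, Heisenberg.proj (θ k) = 1 := fun k hk =>
    FreeGroup.map_eq_one_of_mem_ker hψ (Heisenberg.proj.comp θ) hk
  have hzero := MonoidAlgebra.map_eq_zero_of_mem_ker_mapDomainRingHom_smul_top χ _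
    (heisenbergWeight_of_smul θ hθ hψ hconj) hmem
  rw [heisenbergWeight_commutatorClass, FreeGroup.toHeisenberg_commutatorElement_z (by simp [b, c])]
    at hzero
  exact one_ne_zero hzero
end

section
/- The ideal of (ℤ/3)[b,b⁻¹,t,t⁻¹,x,x⁻¹] generated by the 2×2 minors of the matrix [[btx−bt, x²−x, bx²−bx−x²+x, bt−b²t−btx, tx],[btx−b²tx−bt²x, bt²x−t²x−btx+tx+b², btx−tx+b³−b², 0, b³t−b²t]] is a proper ideal (does not equal the whole ring). -/
/-!
By the Nullstellensatz the ideal of `2×2` minors is proper exactly when the matrix drops to rank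
at most one at some point of the torus over `𝔽̄₃`. There is no such point over `𝔽₃`, but there is
one over `𝔽₉ = 𝔽₃[φ]`, `φ² = φ + 1`: at `b = φ²`, `t = φ`, `x = -φ` both rows become
`(φ, 1 + 2φ, 2, 0, 2 + 2φ)`. Evaluation at that point is a ring homomorphism to a nontrivial ring
killing every minor, so the ideal lies in its kernel.
-/

open LaurentPolynomial QuadraticAlgebra

namespace Matrix

variable {R S m n : Type*} [CommRing R] [CommRing S]

def twoMinorsIdeal (P : Matrix m n R) : Ideal R :=
  Ideal.span {y | ∃ (ρ : Fin 2 → m) (σ : Fin 2 → n), y = (P.submatrix ρ σ).det}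

theorem twoMinorsIdeal_le_ker_of_map_eq_vecMulVec {P : Matrix m n R} {ψ : R →+* S}
    {w : m → S} {v : n → S} (h : P.map ψ = vecMulVec w v) :
    P.twoMinorsIdeal ≤ RingHom.ker ψ := by
  rw [twoMinorsIdeal, Ideal.span_le]
  rintro _ ⟨ρ, σ, rfl⟩
  rw [SetLike.mem_coe, RingHom.mem_ker, RingHom.map_det, RingHom.mapMatrix_apply,
    ← submatrix_map, h]
  exact det_vecMulVec (w ∘ ρ) (v ∘ σ)

theorem twoMinorsIdeal_ne_top_of_map_eq_vecMulVec [Nontrivial S] {P : Matrix m n R}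
    {ψ : R →+* S} {w : m → S} {v : n → S} (h : P.map ψ = vecMulVec w v) :
    P.twoMinorsIdeal ≠ ⊤ :=
  ne_top_of_le_ne_top (RingHom.ker_ne_top ψ) (twoMinorsIdeal_le_ker_of_map_eq_vecMulVec h)

end Matrix

/-- `QuadraticAlgebra R a b` adjoins `ω` with `ω² = a + b ω`, so this is
`𝔽₃[φ]/(φ² - φ - 1) ≅ 𝔽₉`. -/
abbrev GF9 : Type := QuadraticAlgebra (ZMod 3) 1 1

def goldenUnit : GF9ˣ := ⟨ω, ω - 1, by decide, by decide⟩

noncomputable def evalGolden : (ZMod 3)[T;T⁻¹][T;T⁻¹][T;T⁻¹] →+* GF9 :=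
  eval₂ (eval₂ (eval₂ (algebraMap (ZMod 3) GF9) (goldenUnit ^ 2)) goldenUnit) (-goldenUnit)

theorem evalGolden_b : evalGolden (C (C (T 1))) = ω ^ 2 := by
  simp [evalGolden, goldenUnit]

theorem evalGolden_t : evalGolden (C (T 1)) = ω := by
  simp [evalGolden, goldenUnit]

theorem evalGolden_x : evalGolden (T 1) = -ω := by
  simp [evalGolden, goldenUnit]

open LaurentPolynomial in
/-- In `(ℤ/3)[b,b⁻¹,t,t⁻¹,x,x⁻¹]` (realized as iterated Laurent polynomials, with
`b = C (C (T 1))`, `t = C (T 1)`, `x = T 1`), the ideal generated by the `2×2` minors of the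
`2×5` matrix
`[[btx−bt, x²−x, bx²−bx−x²+x, bt−b²t−btx, tx],`
` [btx−b²tx−bt²x, bt²x−t²x−btx+tx+b², btx−tx+b³−b², 0, b³t−b²t]]`
is a proper ideal. -/
theorem stmt19 :
    letI R := LaurentPolynomial (LaurentPolynomial (LaurentPolynomial (ZMod 3)))
    letI b : R := LaurentPolynomial.C (LaurentPolynomial.C (T 1))
    letI t : R := LaurentPolynomial.C (T 1)
    letI x : R := T 1
    letI P : Matrix (Fin 2) (Fin 5) R :=
      !![b*t*x - b*t, x^2 - x, b*x^2 - b*x - x^2 + x, b*t - b^2*t - b*t*x, t*x;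
         b*t*x - b^2*t*x - b*t^2*x, b*t^2*x - t^2*x - b*t*x + t*x + b^2,
           b*t*x - t*x + b^3 - b^2, 0, b^3*t - b^2*t]
    Ideal.span {y : R | ∃ (ρ : Fin 2 → Fin 2) (σ : Fin 2 → Fin 5),
        y = (P.submatrix ρ σ).det} ≠ ⊤ := by
  refine Matrix.twoMinorsIdeal_ne_top_of_map_eq_vecMulVec (R := (ZMod 3)[T;T⁻¹][T;T⁻¹][T;T⁻¹])
    (ψ := evalGolden) (w := 1) (v := ![(ω : GF9), 1 + 2 * ω, 2, 0, 2 + 2 * ω]) ?_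
  refine Matrix.ext fun i j => ?_
  fin_cases i <;> fin_cases j <;>
    simp only [Fin.reduceFinMk, Fin.isValue, Matrix.map_apply, Matrix.vecMulVec_apply,
      Matrix.of_apply, Matrix.cons_val, Pi.one_apply, one_mul, map_sub, map_add, map_mul, map_pow,
      map_zero, evalGolden_b, evalGolden_t, evalGolden_x] <;>
    decide
end
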